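/- arXiv:2304.11055 — 5 statements merged into one kernel-verified Lean document; each statement's English description precedes it below -/
import Mathlib

section
/- For a vector v ∈ K^N, all entries of the row vector vᵀ·A⁻¹ in the last N−k columns vanish if and only if v is a linear combination of the rows of Q. Specialized to v = e₁ − e₂, this says: the first two rows of A⁻¹ agree in every column j > k if and only if e₁ − e₂ lies in the row span of Q — the key equivalence in the proof of the sign-balanced enhancement Lemma of Section 3.4. -/
open Matrix

lemma sum_truncate_aux {K : Type*} [AddCommMonoid K] {N k : ℕ} (hk : k ≤ N)
    (g : Fin N → K) (hg : ∀ i : Fin N, k ≤ (i : ℕ) → g i = 0) :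
    ∑ i : Fin N, g i = ∑ i : Fin k, g (Fin.castLE hk i) := by
  have : ∑ i : Fin k, g (Fin.castLE hk i) = ∑ i ∈ Finset.univ.map (Fin.castLEEmb hk), g i := by
    rw [Finset.sum_map]; rfl
  rw [this]
  refine (Finset.sum_subset (Finset.subset_univ _) ?_).symm
  intro i _ hi
  apply hg
  by_contra h
  push_neg at h
  exact hi (Finset.mem_map.2 ⟨⟨i, h⟩, Finset.mem_univ _, rfl⟩)

/-- For an invertible `N×N` matrix `A` over a field `K`, with `Q` its first `k` rows:
the entries of the row vector `vᵀ · A⁻¹` in the last `N - k` columns all vanish if and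
only if `v` is a linear combination of the rows of `Q`. -/
theorem vecMul_inv_last_columns_vanish_iff_row_span (K : Type*) [Field K]
    (N k : ℕ) (hk : k ≤ N) (A : Matrix (Fin N) (Fin N) K) (hA : IsUnit A)
    (v : Fin N → K) :
    (∀ j : Fin N, k ≤ (j : ℕ) → Matrix.vecMul v A⁻¹ j = 0) ↔
      ∃ w : Fin k → K, v = Matrix.vecMul w (A.submatrix (Fin.castLE hk) id) := by
  have hdet : IsUnit A.det := (isUnit_iff_isUnit_det A).mp hA
  constructor
  · intro h
    set c : Fin N → K := Matrix.vecMul v A⁻¹ with hc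
    refine ⟨fun i => c (Fin.castLE hk i), ?_⟩
    have hv : v = Matrix.vecMul c A := by
      rw [hc, Matrix.vecMul_vecMul, Matrix.nonsing_inv_mul A hdet, Matrix.vecMul_one]
    funext j
    conv_lhs => rw [hv]
    simp only [Matrix.vecMul, Matrix.submatrix_apply, id_eq, dotProduct]
    exact sum_truncate_aux hk (fun i => c i * A i j)
      (fun i hi => by simp only [h i hi, zero_mul])
  · rintro ⟨w, rfl⟩
    intro j hj
    set u : Fin N → K := fun i => if h : (i : ℕ) < k then w ⟨i, h⟩ else 0 with hu
    have key : Matrix.vecMul w (A.submatrix (Fin.castLE hk) id) = Matrix.vecMul u A := by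
      funext j'
      simp only [Matrix.vecMul, Matrix.submatrix_apply, id_eq, dotProduct]
      rw [sum_truncate_aux hk (fun i => u i * A i j')
        (fun i hi => by simp [hu, Nat.not_lt.mpr hi])]
      refine Finset.sum_congr rfl fun i _ => ?_
      simp [hu, i.isLt]
    rw [key, Matrix.vecMul_vecMul, Matrix.mul_nonsing_inv A hdet, Matrix.vecMul_one]
    simp [hu, Nat.not_lt.mpr hj]
end

section
/- Assume the orthogonality condition Q·Q̃ᵀ = 0. Then the matrix F := A⁻¹·B satisfies F·Fᵀ = F. (The identity FFᵀ = F of Appendix C.) -/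
open Matrix

/-- Let `A` be an invertible `N×N` matrix over a field `K`, with first `k` rows `Q` and
last `N - k` rows `Q̃` satisfying `Q · Q̃ᵀ = 0`.  Let `B` agree with `A` on the first `k`
rows and vanish on the rest, and `F := A⁻¹ · B`.  Then `F · Fᵀ = F`. -/
theorem F_mul_F_transpose (K : Type*) [Field K] (N k : ℕ) (hk : k ≤ N)
    (A : Matrix (Fin N) (Fin N) K) (hA : IsUnit A)
    (horth : A.submatrix (Fin.castLE hk) id *
      (A.submatrix (fun a : Fin (N - k) => (⟨k + (a : ℕ), by omega⟩ : Fin N)) id)ᵀ = 0) :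
    let B : Matrix (Fin N) (Fin N) K := Matrix.of fun i j => if (i : ℕ) < k then A i j else 0
    (A⁻¹ * B) * (A⁻¹ * B)ᵀ = A⁻¹ * B := by
  intro B
  have hdet : IsUnit A.det := (Matrix.isUnit_iff_isUnit_det A).mp hA
  have key : B * Bᵀ = B * Aᵀ := by
    ext i j
    simp only [Matrix.mul_apply, Matrix.transpose_apply, B, Matrix.of_apply]
    by_cases hi : (i : ℕ) < k
    · by_cases hj : (j : ℕ) < k
      · simp [hi, hj]
      · simp only [hi, if_true, hj, if_false, mul_zero, Finset.sum_const_zero]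
        have := congrFun (congrFun horth ⟨i, hi⟩) ⟨(j : ℕ) - k, by omega⟩
        simp only [Matrix.mul_apply, Matrix.transpose_apply, Matrix.submatrix_apply,
          Matrix.zero_apply, id_eq] at this
        have h1 : (Fin.castLE hk ⟨i, hi⟩) = i := Fin.ext rfl
        have h2 : (⟨k + ((j : ℕ) - k), by omega⟩ : Fin N) = j := Fin.ext (by simp; omega)
        rw [h1, h2] at this
        exact this.symm
    · simp [hi]
  have hT : Aᵀ * (Aᵀ)⁻¹ = 1 := Matrix.mul_nonsing_inv _ (by simpa using hdet)
  calc (A⁻¹ * B) * (A⁻¹ * B)ᵀ = A⁻¹ * (B * Bᵀ) * (A⁻¹)ᵀ := by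
        rw [Matrix.transpose_mul]; noncomm_ring
    _ = A⁻¹ * B * (Aᵀ * (Aᵀ)⁻¹) := by
        rw [key, Matrix.transpose_nonsing_inv]; noncomm_ring
    _ = A⁻¹ * B := by rw [hT, mul_one]
end

section
/- The kernel of φ is the principal ideal of ℂ[e,f,h] generated by ef + h²/4. Consequently ℂ[e,f,h]/(ef + h²/4) embeds into S/I, presenting the Higgs branch of T[SU(2)] as the A₁ Kleinian singularity ℂ²/ℤ₂, the closure of the minimal nilpotent orbit of sl₂. (Section 2.1.1.) -/
open MvPolynomial

/-- The ideal of `S = ℂ[X₁,X₂,Y₁,Y₂]` generated by the complex moment map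
`X₁Y₁ + X₂Y₂` of `T[SU(2)]`; variables: `X₁ = X 0`, `X₂ = X 1`, `Y₁ = X 2`, `Y₂ = X 3`. -/
noncomputable def momentIdeal : Ideal (MvPolynomial (Fin 4) ℂ) :=
  Ideal.span {X 0 * X 2 + X 1 * X 3}

/-- The ℂ-algebra map `ℂ[e,f,h] → S/I` with `e ↦ X₁Y₂`, `f ↦ X₂Y₁`,
`h ↦ X₁Y₁ − X₂Y₂`. -/
noncomputable def higgsPresentation : MvPolynomial (Fin 3) ℂ →ₐ[ℂ]
    MvPolynomial (Fin 4) ℂ ⧸ momentIdeal :=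
  aeval ![Ideal.Quotient.mk momentIdeal (X 0 * X 3),
          Ideal.Quotient.mk momentIdeal (X 1 * X 2),
          Ideal.Quotient.mk momentIdeal (X 0 * X 2 - X 1 * X 3)]

/-! ### Auxiliary definitions -/

/-- `g = ef + h²/4`. -/
noncomputable def gPoly : MvPolynomial (Fin 3) ℂ := X 0 * X 1 + C (4⁻¹ : ℂ) * X 2 ^ 2

/-- The parametrisation `e ↦ -u²`, `f ↦ v²`, `h ↦ 2uv` of the `A₁` singularity. -/
noncomputable def chi : MvPolynomial (Fin 3) ℂ →ₐ[ℂ] MvPolynomial (Fin 2) ℂ :=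
  aeval ![-(X 0 ^ 2), X 1 ^ 2, C 2 * X 0 * X 1]

noncomputable def mm (i j k : ℕ) : Fin 3 →₀ ℕ :=
  Finsupp.single 0 i + Finsupp.single 1 j + Finsupp.single 2 k

lemma mm_apply0 (i j k : ℕ) : mm i j k 0 = i := by simp [mm, Finsupp.single_apply]
lemma mm_apply1 (i j k : ℕ) : mm i j k 1 = j := by simp [mm, Finsupp.single_apply]

lemma mm_eq_self (d : Fin 3 →₀ ℕ) : mm (d 0) (d 1) (d 2) = d := by
  ext a; fin_cases a <;> simp [mm, Finsupp.single_apply]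

lemma monomial_mm (i j k : ℕ) (c : ℂ) :
    monomial (mm i j k) c = C c * X 0 ^ i * X 1 ^ j * X 2 ^ k := by
  rw [C_apply, X_pow_eq_monomial, X_pow_eq_monomial, X_pow_eq_monomial,
    monomial_mul, monomial_mul, monomial_mul, mm]
  simp

lemma step_identity (i j k : ℕ) (c : ℂ) :
    monomial (mm (i+1) (j+1) k) c
      = monomial (mm i j k) c * gPoly + monomial (mm i j (k+2)) (-(4⁻¹ * c)) := by
  simp only [monomial_mm, gPoly, map_neg, map_mul]
  ring

/-- Division with remainder by `g` for monomials; remainders have no mixed `ef` terms. -/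
lemma div_mono (i : ℕ) : ∀ (j k : ℕ) (c : ℂ), ∃ q r : MvPolynomial (Fin 3) ℂ,
    monomial (mm i j k) c = q * gPoly + r ∧ ∀ d ∈ r.support, d 0 = 0 ∨ d 1 = 0 := by
  induction i with
  | zero =>
    intro j k c
    refine ⟨0, monomial (mm 0 j k) c, by ring, ?_⟩
    intro d hd
    rw [support_monomial] at hd
    split at hd
    · simp at hd
    · left
      simp only [Finset.mem_singleton] at hd
      subst hd
      exact mm_apply0 0 j k
  | succ i ih =>
    intro j k c
    cases j with
    | zero =>
      refine ⟨0, monomial (mm (i+1) 0 k) c, by ring, ?_⟩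
      intro d hd
      rw [support_monomial] at hd
      split at hd
      · simp at hd
      · right
        simp only [Finset.mem_singleton] at hd
        subst hd
        exact mm_apply1 _ 0 k
    | succ j =>
      obtain ⟨q, r, hqr, hr⟩ := ih j (k+2) (-(4⁻¹ * c))
      refine ⟨monomial (mm i j k) c + q, r, ?_, hr⟩
      rw [step_identity, hqr]
      ring

/-- Division with remainder by `g`. -/
lemma div_all (p : MvPolynomial (Fin 3) ℂ) : ∃ q r : MvPolynomial (Fin 3) ℂ,
    p = q * gPoly + r ∧ ∀ d ∈ r.support, d 0 = 0 ∨ d 1 = 0 := by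
  induction p using MvPolynomial.induction_on' with
  | monomial u a =>
    have := div_mono (u 0) (u 1) (u 2) a
    rwa [mm_eq_self] at this
  | add p q hp hq =>
    obtain ⟨qp, rp, hp1, hp2⟩ := hp
    obtain ⟨qq, rq, hq1, hq2⟩ := hq
    refine ⟨qp + qq, rp + rq, by rw [hp1, hq1]; ring, ?_⟩
    intro d hd
    have := MvPolynomial.support_add (p := rp) (q := rq) hd
    rw [Finset.mem_union] at this
    rcases this with h | h
    · exact hp2 d h
    · exact hq2 d h

/-- Exponent map induced by `chi` on monomials. -/
noncomputable def sig (d : Fin 3 →₀ ℕ) : Fin 2 →₀ ℕ :=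
  Finsupp.single 0 (2 * d 0 + d 2) + Finsupp.single 1 (2 * d 1 + d 2)

lemma monomial_sig (d : Fin 3 →₀ ℕ) (c : ℂ) :
    monomial (sig d) c = C c * X 0 ^ (2 * d 0 + d 2) * X 1 ^ (2 * d 1 + d 2) := by
  rw [C_apply, X_pow_eq_monomial, X_pow_eq_monomial, monomial_mul, monomial_mul, sig]
  simp

lemma chi_monomial (d : Fin 3 →₀ ℕ) (c : ℂ) :
    chi (monomial d c) = monomial (sig d) ((-1) ^ (d 0) * 2 ^ (d 2) * c) := by
  conv_lhs => rw [← mm_eq_self d, monomial_mm]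
  rw [monomial_sig]
  simp only [chi, map_mul, map_pow, aeval_X, aeval_C, Matrix.cons_val_zero,
    Matrix.cons_val_one, Matrix.head_cons, Matrix.cons_val_two, Matrix.tail_cons,
    algebraMap_eq, map_neg, map_one, map_ofNat]
  ring

lemma sig_inj {d d' : Fin 3 →₀ ℕ} (h : d 0 = 0 ∨ d 1 = 0) (h' : d' 0 = 0 ∨ d' 1 = 0)
    (he : sig d = sig d') : d = d' := by
  have e0 := DFunLike.congr_fun he 0
  have e1 := DFunLike.congr_fun he 1
  simp [sig, Finsupp.single_apply] at e0 e1
  have : d 0 = d' 0 ∧ d 1 = d' 1 ∧ d 2 = d' 2 := by omega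
  ext a
  fin_cases a
  · exact this.1
  · exact this.2.1
  · exact this.2.2

/-- `chi` is injective on polynomials with no mixed `ef` monomials. -/
lemma chi_normal_eq_zero {r : MvPolynomial (Fin 3) ℂ}
    (hr : ∀ d ∈ r.support, d 0 = 0 ∨ d 1 = 0) (h0 : chi r = 0) : r = 0 := by
  rw [MvPolynomial.eq_zero_iff]
  intro d
  by_cases hd : d ∈ r.support
  · have hsum : chi r
        = ∑ v ∈ r.support, monomial (sig v) ((-1)^(v 0) * 2^(v 2) * coeff v r) := by
      conv_lhs => rw [as_sum r]
      rw [map_sum]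
      exact Finset.sum_congr rfl fun v _ => chi_monomial v _
    have hc : coeff (sig d) (chi r) = (-1)^(d 0) * 2^(d 2) * coeff d r := by
      rw [hsum, MvPolynomial.coeff_sum]
      rw [Finset.sum_eq_single d]
      · rw [coeff_monomial, if_pos rfl]
      · intro v hv hvd
        rw [coeff_monomial, if_neg]
        intro he
        exact hvd (sig_inj (hr v hv) (hr d hd) he)
      · intro h; exact absurd hd h
    rw [h0, coeff_zero] at hc
    have := hc.symm
    rw [mul_assoc] at this
    rcases mul_eq_zero.mp this with h | h
    · exact absurd h (pow_ne_zero _ (by norm_num))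
    rcases mul_eq_zero.mp h with h | h
    · exact absurd h (pow_ne_zero _ (by norm_num))
    · exact h
  · exact notMem_support_iff.mp hd

/-- The map `β : S → ℂ[u,v]`, `X₁ ↦ u`, `X₂ ↦ v`, `Y₁ ↦ v`, `Y₂ ↦ -u`. -/
noncomputable def beta : MvPolynomial (Fin 4) ℂ →ₐ[ℂ] MvPolynomial (Fin 2) ℂ :=
  aeval ![X 0, X 1, X 1, -(X 0)]

lemma beta_vanish : ∀ a ∈ momentIdeal, beta a = 0 := by
  intro a ha
  rw [momentIdeal, Ideal.mem_span_singleton] at ha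
  obtain ⟨c, rfl⟩ := ha
  rw [map_mul]
  have : beta (X 0 * X 2 + X 1 * X 3) = 0 := by
    simp [beta]
    ring
  rw [this, zero_mul]

noncomputable def beta' : (MvPolynomial (Fin 4) ℂ ⧸ momentIdeal) →ₐ[ℂ] MvPolynomial (Fin 2) ℂ :=
  Ideal.Quotient.liftₐ momentIdeal beta beta_vanish

lemma beta'_mk (p : MvPolynomial (Fin 4) ℂ) : beta' (Ideal.Quotient.mk _ p) = beta p := rfl

lemma beta'_comp : beta'.comp higgsPresentation = chi := by
  apply algHom_ext
  intro i
  fin_cases i <;>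
    simp [higgsPresentation, chi, beta'_mk, beta,
      Ideal.Quotient.lift_mk, map_ofNat] <;> ring

lemma chi_g : chi gPoly = 0 := by
  simp only [chi, gPoly, map_add, map_mul, map_pow, aeval_X, aeval_C, algebraMap_eq,
    Matrix.cons_val_zero, Matrix.cons_val_one, Matrix.head_cons, Matrix.cons_val_two,
    Matrix.tail_cons]
  have h4 : (C (4⁻¹:ℂ) : MvPolynomial (Fin 2) ℂ) * C (4:ℂ) = 1 := by
    rw [← map_mul]; norm_num
  have h2 : (C (2:ℂ) : MvPolynomial (Fin 2) ℂ) ^ 2 = C (4:ℂ) := by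
    rw [← map_pow]; norm_num
  linear_combination (X 0 ^ 2 * X 1 ^ 2 : MvPolynomial (Fin 2) ℂ) * C (4⁻¹:ℂ) * h2
    + (X 0 ^ 2 * X 1 ^ 2 : MvPolynomial (Fin 2) ℂ) * h4

lemma phi_factor : higgsPresentation = (Ideal.Quotient.mkₐ ℂ momentIdeal).comp
    (aeval ![X 0 * X 3, X 1 * X 2, X 0 * X 2 - X 1 * X 3]) := by
  apply algHom_ext
  intro i
  fin_cases i <;> simp [higgsPresentation]

lemma phi_g : higgsPresentation gPoly = 0 := by
  rw [phi_factor, AlgHom.comp_apply, Ideal.Quotient.mkₐ_eq_mk,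
    Ideal.Quotient.eq_zero_iff_mem, momentIdeal, Ideal.mem_span_singleton]
  refine ⟨C (4⁻¹ : ℂ) * (X 0 * X 2 + X 1 * X 3), ?_⟩
  simp only [gPoly, map_add, map_mul, map_pow, aeval_X, aeval_C, algebraMap_eq,
    Matrix.cons_val_zero, Matrix.cons_val_one, Matrix.head_cons, Matrix.cons_val_two,
    Matrix.tail_cons]
  have h4 : (C (4⁻¹:ℂ) : MvPolynomial (Fin 4) ℂ) * C (4:ℂ) = 1 := by
    rw [← map_mul]; norm_num
  have h4' : (C (4⁻¹:ℂ) : MvPolynomial (Fin 4) ℂ) * 4 = 1 := by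
    rw [show (4 : MvPolynomial (Fin 4) ℂ) = C (4:ℂ) from (map_ofNat C 4).symm]
    exact h4
  linear_combination -(X 0 * X 2 * (X 1 * X 3) : MvPolynomial (Fin 4) ℂ) * h4'

lemma chi_of_ker {p : MvPolynomial (Fin 3) ℂ} (hp : higgsPresentation p = 0) :
    chi p = 0 := by
  have : chi p = beta' (higgsPresentation p) := by
    rw [← beta'_comp]; rfl
  rw [this, hp, map_zero]

/-- The kernel of `φ : ℂ[e,f,h] → S/I`, `e ↦ X₁Y₂`, `f ↦ X₂Y₁`, `h ↦ X₁Y₁ − X₂Y₂`, is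
the principal ideal `(ef + h²/4)`.  Consequently `ℂ[e,f,h]/(ef + h²/4)` — the `A₁`
Kleinian singularity, i.e. the closure of the minimal nilpotent orbit of `sl₂` — embeds
into `S/I`, via the induced map. -/
theorem higgs_branch_T_SU2_presentation :
    RingHom.ker higgsPresentation.toRingHom =
      Ideal.span {X 0 * X 1 + C (4⁻¹ : ℂ) * X 2 ^ 2} ∧
    ∃ ι : (MvPolynomial (Fin 3) ℂ ⧸
          (Ideal.span {X 0 * X 1 + C (4⁻¹ : ℂ) * X 2 ^ 2} : Ideal (MvPolynomial (Fin 3) ℂ)))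
        →ₐ[ℂ] MvPolynomial (Fin 4) ℂ ⧸ momentIdeal,
      Function.Injective ι ∧
      ι.comp (Ideal.Quotient.mkₐ ℂ _) = higgsPresentation := by
  have hker : RingHom.ker higgsPresentation.toRingHom = Ideal.span {gPoly} := by
    apply le_antisymm
    · intro p hp
      have hp0 : higgsPresentation p = 0 := hp
      obtain ⟨q, r, hqr, hr⟩ := div_all p
      have hchir : chi r = 0 := by
        have h1 : chi p = 0 := chi_of_ker hp0
        have h2 := congrArg chi hqr
        rw [h1, map_add, map_mul, chi_g, mul_zero, zero_add] at h2
        exact h2.symm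
      have hr0 : r = 0 := chi_normal_eq_zero hr hchir
      rw [Ideal.mem_span_singleton]
      exact ⟨q, by rw [hqr, hr0, add_zero, mul_comm]⟩
    · rw [Ideal.span_le, Set.singleton_subset_iff]
      exact phi_g
  have hspan : (Ideal.span {X 0 * X 1 + C (4⁻¹ : ℂ) * X 2 ^ 2}
      : Ideal (MvPolynomial (Fin 3) ℂ)) = Ideal.span {gPoly} := rfl
  refine ⟨by rw [hspan]; exact hker, ?_⟩
  have hvanish : ∀ a ∈ (Ideal.span {X 0 * X 1 + C (4⁻¹ : ℂ) * X 2 ^ 2}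
      : Ideal (MvPolynomial (Fin 3) ℂ)), higgsPresentation a = 0 := by
    intro a ha
    rw [hspan, ← hker] at ha
    exact ha
  refine ⟨Ideal.Quotient.liftₐ _ higgsPresentation hvanish, ?_,
    Ideal.Quotient.liftₐ_comp _ _ _⟩
  intro x y hxy
  obtain ⟨a, rfl⟩ := Ideal.Quotient.mk_surjective x
  obtain ⟨b, rfl⟩ := Ideal.Quotient.mk_surjective y
  have ha : ∀ c : MvPolynomial (Fin 3) ℂ,
      Ideal.Quotient.liftₐ _ higgsPresentation hvanish (Ideal.Quotient.mk _ c)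
        = higgsPresentation c := fun c => by
    rw [Ideal.Quotient.liftₐ_apply]
    rfl
  rw [ha, ha] at hxy
  rw [Ideal.Quotient.eq]
  have : higgsPresentation (a - b) = 0 := by rw [map_sub, hxy, sub_self]
  have hab : a - b ∈ RingHom.ker higgsPresentation.toRingHom := this
  rw [hker] at hab
  rwa [hspan]
end

section
/- The kernel of φ is the ideal of ℂ[m] generated by the 2×2 minors {m_{ij}m_{kl} − m_{il}m_{kj} : 1 ≤ i,j,k,l ≤ N} together with the trace Σ_{i=1}^N m_{ii}. Hence the Higgs branch chiral ring of SQED[N] is presented as the coordinate ring of rank ≤ 1 traceless N×N matrices, i.e. the closure of the minimal nilpotent orbit in sl_N*. (Section 5.2.) -/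
open MvPolynomial

/-- The ideal of `R := ℂ[X₁,…,X_N,Y₁,…,Y_N]` generated by the complex moment map
`∑ₖ XₖYₖ` of SQED[N]. -/
noncomputable def sqedMomentIdeal (N : ℕ) : Ideal (MvPolynomial (Fin N ⊕ Fin N) ℂ) :=
  Ideal.span {∑ k : Fin N, X (Sum.inl k) * X (Sum.inr k)}

/-- The ℂ-algebra map `ℂ[m_{ij}] → R/I`, `m_{ij} ↦ Xᵢ Yⱼ`. -/
noncomputable def mesonMap (N : ℕ) : MvPolynomial (Fin N × Fin N) ℂ →ₐ[ℂ]
    MvPolynomial (Fin N ⊕ Fin N) ℂ ⧸ sqedMomentIdeal N :=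
  aeval fun p : Fin N × Fin N =>
    Ideal.Quotient.mk (sqedMomentIdeal N) (X (Sum.inl p.1) * X (Sum.inr p.2))

namespace SqedAux

variable (N : ℕ)

/-- The lift `ψ : ℂ[m] → R`, `m_{ij} ↦ Xᵢ Yⱼ`. -/
noncomputable def psi : MvPolynomial (Fin N × Fin N) ℂ →ₐ[ℂ] MvPolynomial (Fin N ⊕ Fin N) ℂ :=
  aeval fun p : Fin N × Fin N => X (Sum.inl p.1) * X (Sum.inr p.2)

/-- Exponent of the image of a single meson variable. -/
noncomputable def uExp (p : Fin N × Fin N) : (Fin N ⊕ Fin N) →₀ ℕ :=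
  Finsupp.single (Sum.inl p.1) 1 + Finsupp.single (Sum.inr p.2) 1

/-- Exponent of the image of a meson monomial. -/
noncomputable def Phi (s : (Fin N × Fin N) →₀ ℕ) : (Fin N ⊕ Fin N) →₀ ℕ :=
  s.sum fun p n => n • uExp N p

@[simp] lemma Phi_zero : Phi N 0 = 0 := Finsupp.sum_zero_index

@[simp] lemma Phi_single (p : Fin N × Fin N) (n : ℕ) :
    Phi N (Finsupp.single p n) = n • uExp N p := by
  simp [Phi, Finsupp.sum_single_index]

@[simp] lemma Phi_add (s t : (Fin N × Fin N) →₀ ℕ) :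
    Phi N (s + t) = Phi N s + Phi N t := by
  classical
  exact Finsupp.sum_add_index' (fun p => by simp) (fun p m n => add_smul m n (uExp N p))

lemma Phi_apply_inl (s : (Fin N × Fin N) →₀ ℕ) (i : Fin N) :
    Phi N s (Sum.inl i) = ∑ j, s (i, j) := by
  classical
  rw [Phi, Finsupp.sum_apply, Finsupp.sum_fintype]
  · rw [Fintype.sum_prod_type]
    have : ∀ a : Fin N, (∑ b, (s (a, b) • uExp N (a, b)) (Sum.inl i))
        = if a = i then ∑ b, s (a, b) else 0 := by
      intro a
      split_ifs with h
      · subst h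
        refine Finset.sum_congr rfl fun b _ => ?_
        simp [uExp, Finsupp.single_apply]
      · refine Finset.sum_eq_zero fun b _ => ?_
        simp [uExp, Finsupp.single_apply, h]
    rw [Finset.sum_congr rfl fun a _ => this a]
    simp
  · intro p; simp

lemma Phi_apply_inr (s : (Fin N × Fin N) →₀ ℕ) (j : Fin N) :
    Phi N s (Sum.inr j) = ∑ i, s (i, j) := by
  classical
  rw [Phi, Finsupp.sum_apply, Finsupp.sum_fintype]
  · rw [Fintype.sum_prod_type_right]
    have : ∀ b : Fin N, (∑ a, (s (a, b) • uExp N (a, b)) (Sum.inr j))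
        = if b = j then ∑ a, s (a, b) else 0 := by
      intro b
      split_ifs with h
      · subst h
        refine Finset.sum_congr rfl fun a _ => ?_
        simp [uExp, Finsupp.single_apply]
      · refine Finset.sum_eq_zero fun a _ => ?_
        simp [uExp, Finsupp.single_apply, h]
    rw [Finset.sum_congr rfl fun b _ => this b]
    simp
  · intro p; simp

lemma psi_monomial (s : (Fin N × Fin N) →₀ ℕ) (c : ℂ) :
    psi N (monomial s c) = monomial (Phi N s) c := by
  classical
  induction s using Finsupp.induction with
  | zero => simp [psi, aeval_monomial]
  | single_add p n f hpf hn ih =>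
      have h1 : (monomial (Finsupp.single p n + f) c : MvPolynomial (Fin N × Fin N) ℂ)
          = monomial (Finsupp.single p n) 1 * monomial f c := by
        rw [monomial_mul, one_mul]
      have h2 : psi N (monomial (Finsupp.single p n) 1)
          = monomial (n • uExp N p) 1 := by
        rw [psi, aeval_monomial]
        rw [Finsupp.prod_single_index (by simp)]
        have : (X (Sum.inl p.1) * X (Sum.inr p.2) : MvPolynomial (Fin N ⊕ Fin N) ℂ)
            = monomial (uExp N p) 1 := by
          rw [X, X, monomial_mul, one_mul, uExp]
        rw [this, monomial_pow, one_pow]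
        simp
      rw [h1, map_mul, h2, ih, monomial_mul, one_mul, Phi_add, Phi_single]

/-- The ideal of 2×2 minors. -/
noncomputable def minorIdeal : Ideal (MvPolynomial (Fin N × Fin N) ℂ) :=
  Ideal.span
    (Set.range fun q : (Fin N × Fin N) × Fin N × Fin N =>
      (X (q.1.1, q.1.2) * X (q.2.1, q.2.2) - X (q.1.1, q.2.2) * X (q.2.1, q.1.2) :
        MvPolynomial (Fin N × Fin N) ℂ))

lemma X_mul_X (a b : Fin N × Fin N) :
    (X a * X b : MvPolynomial (Fin N × Fin N) ℂ)
      = monomial (Finsupp.single a 1 + Finsupp.single b 1) 1 := by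
  rw [X, X, monomial_mul, one_mul]

lemma Phi_eq_zero_iff (s : (Fin N × Fin N) →₀ ℕ) : Phi N s = 0 ↔ s = 0 := by
  constructor
  · intro h
    ext p
    have h1 := congrArg (fun t => t (Sum.inl p.1)) h
    simp only [Phi_apply_inl, Finsupp.coe_zero, Pi.zero_apply] at h1
    have := Finset.sum_eq_zero_iff.mp h1 p.2 (Finset.mem_univ _)
    simpa using this
  · rintro rfl; simp

/-- Key combinatorial lemma: two monomials with the same row and column margins
are congruent modulo the ideal of 2×2 minors. -/
lemma monomial_sub_mem_minor :
    ∀ (n : ℕ) (s s' : (Fin N × Fin N) →₀ ℕ), (s.sum fun _ k => k) = n →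
      Phi N s = Phi N s' →
      (monomial s 1 - monomial s' 1 : MvPolynomial (Fin N × Fin N) ℂ) ∈ minorIdeal N := by
  intro n
  induction n using Nat.strong_induction_on with
  | _ n IH =>
    intro s s' hdeg hΦ
    classical
    by_cases hs : s = 0
    · subst hs
      have : s' = 0 := (Phi_eq_zero_iff N s').mp (by rw [← hΦ]; simp)
      subst this
      simp
    · -- pick (i,j) with s (i,j) ≠ 0
      obtain ⟨p, hp⟩ := Finsupp.support_nonempty_iff.mpr hs
      obtain ⟨i, j⟩ := p
      have hsij : s (i, j) ≠ 0 := Finsupp.mem_support_iff.mp hp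
      have hn : n ≠ 0 := by
        intro h0
        subst h0
        rw [Finsupp.sum] at hdeg
        exact hsij (Finset.sum_eq_zero_iff.mp hdeg (i, j) hp)
      -- reduction step: if t also has t (i,j) ≠ 0 and the same margins as s,
      -- then monomial s 1 - monomial t 1 ∈ minorIdeal N
      have red : ∀ t : (Fin N × Fin N) →₀ ℕ, t (i, j) ≠ 0 → Phi N s = Phi N t →
          (monomial s 1 - monomial t 1 : MvPolynomial (Fin N × Fin N) ℂ) ∈ minorIdeal N := by
        intro t htij hΦt
        set e : (Fin N × Fin N) →₀ ℕ := Finsupp.single (i, j) 1 with he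
        have hse : s = e + (s - e) := by
          ext q
          rcases eq_or_ne q (i, j) with rfl | hq
          · simp [he]
            omega
          · simp [he, Finsupp.single_apply, Ne.symm hq]
        have hte : t = e + (t - e) := by
          ext q
          rcases eq_or_ne q (i, j) with rfl | hq
          · simp [he]
            omega
          · simp [he, Finsupp.single_apply, Ne.symm hq]
        have hΦ' : Phi N (s - e) = Phi N (t - e) := by
          have h1 : Phi N e + Phi N (s - e) = Phi N e + Phi N (t - e) := by
            rw [← Phi_add, ← Phi_add, ← hse, ← hte]; exact hΦt
          exact add_left_cancel h1
        have hdeg' : ((s - e).sum fun _ k => k) + 1 = n := by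
          rw [← hdeg]
          conv_rhs => rw [hse]
          rw [Finsupp.sum_add_index' (fun _ => rfl) (fun _ m k => rfl)]
          simp [he, Finsupp.sum_single_index]
          ring
        have hmem := IH (n - 1) (by omega) (s - e) (t - e) (by omega) hΦ'
        have hfac : (monomial s 1 - monomial t 1 : MvPolynomial (Fin N × Fin N) ℂ)
            = monomial e 1 * (monomial (s - e) 1 - monomial (t - e) 1) := by
          rw [mul_sub, monomial_mul, monomial_mul, one_mul, ← hse, ← hte]
        rw [hfac]
        exact Ideal.mul_mem_left _ _ hmem
      by_cases hs'ij : s' (i, j) ≠ 0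
      · exact red s' hs'ij hΦ
      · push_neg at hs'ij
        -- find j' with s' (i, j') ≠ 0 and i' with s' (i', j) ≠ 0
        have hrow : (∑ b, s' (i, b)) ≠ 0 := by
          rw [← Phi_apply_inl, ← hΦ, Phi_apply_inl]
          intro h0
          exact hsij (by simpa using Finset.sum_eq_zero_iff.mp h0 j (Finset.mem_univ _))
        have hcol : (∑ a, s' (a, j)) ≠ 0 := by
          rw [← Phi_apply_inr, ← hΦ, Phi_apply_inr]
          intro h0
          exact hsij (by simpa using Finset.sum_eq_zero_iff.mp h0 i (Finset.mem_univ _))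
        obtain ⟨j', -, hj'⟩ := Finset.exists_ne_zero_of_sum_ne_zero hrow
        obtain ⟨i', -, hi'⟩ := Finset.exists_ne_zero_of_sum_ne_zero hcol
        have hjj' : j' ≠ j := fun h => hj' (by rw [h]; exact hs'ij)
        have hii' : i' ≠ i := fun h => hi' (by rw [h]; exact hs'ij)
        -- base exponent
        set s0 : (Fin N × Fin N) →₀ ℕ :=
          s' - Finsupp.single (i, j') 1 - Finsupp.single (i', j) 1 with hs0
        have hdisj : ((i, j') : Fin N × Fin N) ≠ (i', j) := by
          intro h
          exact hii' (congrArg Prod.fst h).symm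
        have hs'eq : s' = s0 + Finsupp.single (i, j') 1 + Finsupp.single (i', j) 1 := by
          ext q
          rcases eq_or_ne q (i, j') with rfl | h1
          · simp [hs0, Finsupp.single_apply, Finsupp.tsub_apply, Prod.mk.injEq, hii', hjj']
            omega
          · rcases eq_or_ne q (i', j) with rfl | h2
            · simp [hs0, Finsupp.single_apply, Finsupp.tsub_apply, Prod.mk.injEq,
                Ne.symm hii', Ne.symm hjj']
              omega
            · simp [hs0, Finsupp.single_apply, Finsupp.tsub_apply, Ne.symm h1, Ne.symm h2]
        set s'' : (Fin N × Fin N) →₀ ℕ :=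
          s0 + Finsupp.single (i, j) 1 + Finsupp.single (i', j') 1 with hs''
        have hs''ij : s'' (i, j) ≠ 0 := by
          simp [hs'', Finsupp.single_apply, (show ((i', j') : Fin N × Fin N) ≠ (i, j)
            from fun h => hii' (congrArg Prod.fst h))]
        have hΦ'' : Phi N s'' = Phi N s' := by
          rw [hs'', hs'eq]
          simp only [Phi_add, Phi_single, one_smul, uExp]
          abel
        have hswap : (monomial s' 1 - monomial s'' 1 :
            MvPolynomial (Fin N × Fin N) ℂ) ∈ minorIdeal N := by
          have e1 : (monomial s' 1 : MvPolynomial (Fin N × Fin N) ℂ)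
              = monomial s0 1 * (X (i, j') * X (i', j)) := by
            rw [X_mul_X, monomial_mul, one_mul, hs'eq, add_assoc]
          have e2 : (monomial s'' 1 : MvPolynomial (Fin N × Fin N) ℂ)
              = monomial s0 1 * (X (i, j) * X (i', j')) := by
            rw [X_mul_X, monomial_mul, one_mul, hs'', add_assoc]
          have : (monomial s' 1 - monomial s'' 1 : MvPolynomial (Fin N × Fin N) ℂ)
              = monomial s0 1 *
                (X (i, j') * X (i', j) - X (i, j) * X (i', j')) := by
            rw [mul_sub, ← e1, ← e2]
          rw [this]
          refine Ideal.mul_mem_left _ _ (Ideal.subset_span ?_)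
          exact ⟨((i, j'), (i', j)), rfl⟩
        have h1 := red s'' hs''ij (hΦ.trans hΦ''.symm)
        have : (monomial s 1 - monomial s' 1 : MvPolynomial (Fin N × Fin N) ℂ)
            = (monomial s 1 - monomial s'' 1) - (monomial s' 1 - monomial s'' 1) := by
          ring
        rw [this]
        exact sub_mem h1 hswap

lemma psi_apply_eq (f : MvPolynomial (Fin N × Fin N) ℂ) :
    psi N f = ∑ s ∈ f.support, monomial (Phi N s) (coeff s f) := by
  conv_lhs => rw [f.as_sum]
  rw [map_sum]
  exact Finset.sum_congr rfl fun s _ => psi_monomial N s _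

lemma coeff_psi (f : MvPolynomial (Fin N × Fin N) ℂ) (t : (Fin N ⊕ Fin N) →₀ ℕ) :
    coeff t (psi N f) = ∑ s ∈ f.support with Phi N s = t, coeff s f := by
  classical
  rw [psi_apply_eq, coeff_sum, Finset.sum_filter]
  exact Finset.sum_congr rfl fun s _ => coeff_monomial t (Phi N s) _

lemma minor_le_ker : minorIdeal N ≤ RingHom.ker (psi N).toRingHom := by
  rw [minorIdeal, Ideal.span_le]
  rintro _ ⟨q, rfl⟩
  simp only [SetLike.mem_coe, RingHom.mem_ker, AlgHom.toRingHom_eq_coe,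
    RingHom.coe_coe, map_sub, map_mul]
  simp only [psi, aeval_X]
  ring

lemma mem_minor_of_psi_eq_zero :
    ∀ (n : ℕ) (f : MvPolynomial (Fin N × Fin N) ℂ), f.support.card = n →
      psi N f = 0 → f ∈ minorIdeal N := by
  intro n
  induction n using Nat.strong_induction_on with
  | _ n IH =>
    intro f hcard hf0
    classical
    by_cases hf : f = 0
    · subst hf; exact zero_mem _
    · obtain ⟨s₀, hs₀⟩ := MvPolynomial.support_nonempty.mpr hf
      set cls : Finset ((Fin N × Fin N) →₀ ℕ) :=
        {s ∈ f.support | Phi N s = Phi N s₀} with hcls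
      have hs₀cls : s₀ ∈ cls := Finset.mem_filter.mpr ⟨hs₀, rfl⟩
      have hsum : ∑ s ∈ cls, coeff s f = 0 := by
        rw [← coeff_psi, hf0, coeff_zero]
      set d : MvPolynomial (Fin N × Fin N) ℂ :=
        ∑ s ∈ cls, monomial s (coeff s f) with hd
      have hdK : d ∈ minorIdeal N := by
        have hrewrite : d = ∑ s ∈ cls, C (coeff s f) * (monomial s 1 - monomial s₀ 1) := by
          have : ∀ s ∈ cls, C (coeff s f) * (monomial s 1 - monomial s₀ 1)
              = monomial s (coeff s f) - monomial s₀ (coeff s f) := by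
            intro s _
            simp [mul_sub, C_mul_monomial]
          rw [Finset.sum_congr rfl this, Finset.sum_sub_distrib, ← map_sum, hsum,
            map_zero, sub_zero, hd]
        rw [hrewrite]
        refine Submodule.sum_mem _ fun s hscls => ?_
        refine Ideal.mul_mem_left _ _ ?_
        exact monomial_sub_mem_minor N (s.sum fun _ k => k) s s₀ rfl
          (Finset.mem_filter.mp hscls).2
      set g : MvPolynomial (Fin N × Fin N) ℂ := f - d with hg
      have hcoeff : ∀ t, coeff t g = if t ∈ cls then 0 else coeff t f := by
        intro t
        have hcd : coeff t d = if t ∈ cls then coeff t f else 0 := by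
          rw [hd, coeff_sum]
          rw [Finset.sum_congr rfl fun s _ => coeff_monomial t s (coeff s f)]
          exact Finset.sum_ite_eq' cls t fun s => coeff s f
        rw [hg, coeff_sub, hcd]
        split_ifs <;> ring
      have hsub : g.support ⊆ f.support \ cls := by
        intro t ht
        rw [MvPolynomial.mem_support_iff] at ht
        rw [hcoeff t] at ht
        split_ifs at ht with h
        · exact absurd rfl ht
        · exact Finset.mem_sdiff.mpr ⟨MvPolynomial.mem_support_iff.mpr ht, h⟩
      have hlt : g.support.card < n := by
        rw [← hcard]
        refine Finset.card_lt_card ?_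
        refine Finset.ssubset_iff_of_subset
          (hsub.trans (Finset.sdiff_subset)) |>.mpr ?_
        refine ⟨s₀, hs₀, fun hmem => ?_⟩
        have := hsub hmem
        exact (Finset.mem_sdiff.mp this).2 hs₀cls
      have hg0 : psi N g = 0 := by
        have : psi N d = 0 := minor_le_ker N hdK
        rw [hg, map_sub, hf0, this, sub_zero]
      have hgK : g ∈ minorIdeal N := IH g.support.card hlt g rfl hg0
      have : f = g + d := by rw [hg]; ring
      rw [this]
      exact add_mem hgK hdK

/-- The weight: `X` variables have weight `1`, `Y` variables weight `-1`. -/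
def wt : Fin N ⊕ Fin N → ℤ := Sum.elim (fun _ => 1) (fun _ => -1)

lemma X_mul_X' (a b : Fin N ⊕ Fin N) :
    (X a * X b : MvPolynomial (Fin N ⊕ Fin N) ℂ)
      = monomial (Finsupp.single a 1 + Finsupp.single b 1) 1 := by
  rw [X, X, monomial_mul, one_mul]

lemma weight_eq (t : (Fin N ⊕ Fin N) →₀ ℕ) :
    Finsupp.weight (wt N) t
      = (∑ i, (t (Sum.inl i) : ℤ)) - ∑ j, (t (Sum.inr j) : ℤ) := by
  classical
  rw [Finsupp.weight_apply, Finsupp.sum_fintype _ _ (fun a => by simp)]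
  rw [Fintype.sum_sum_type]
  simp [wt, sub_eq_add_neg, Finset.sum_neg_distrib]

lemma weight_Phi (s : (Fin N × Fin N) →₀ ℕ) :
    Finsupp.weight (wt N) (Phi N s) = 0 := by
  rw [weight_eq]
  simp only [Phi_apply_inl, Phi_apply_inr]
  push_cast
  rw [Finset.sum_comm]
  exact sub_self _

lemma psi_isHomog (f : MvPolynomial (Fin N × Fin N) ℂ) :
    IsWeightedHomogeneous (wt N) (psi N f) 0 := by
  rw [← mem_weightedHomogeneousSubmodule, psi_apply_eq]
  refine Submodule.sum_mem _ fun s _ => ?_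
  rw [mem_weightedHomogeneousSubmodule]
  exact isWeightedHomogeneous_monomial _ _ _ (weight_Phi N s)

lemma mu_isHomog :
    IsWeightedHomogeneous (wt N)
      (∑ k : Fin N, X (Sum.inl k) * X (Sum.inr k) : MvPolynomial (Fin N ⊕ Fin N) ℂ) 0 := by
  rw [← mem_weightedHomogeneousSubmodule]
  refine Submodule.sum_mem _ fun k _ => ?_
  rw [mem_weightedHomogeneousSubmodule, X_mul_X']
  refine isWeightedHomogeneous_monomial _ _ _ ?_
  rw [weight_eq]
  simp [Finsupp.single_apply]

lemma homog_mul_component (a g : MvPolynomial (Fin N ⊕ Fin N) ℂ)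
    (ha : IsWeightedHomogeneous (wt N) a 0) :
    weightedHomogeneousComponent (wt N) 0 (a * g)
      = a * weightedHomogeneousComponent (wt N) 0 g := by
  classical
  apply MvPolynomial.ext
  intro d
  rw [coeff_weightedHomogeneousComponent, coeff_mul, coeff_mul]
  by_cases hd : Finsupp.weight (wt N) d = 0
  · rw [if_pos hd]
    refine Finset.sum_congr rfl fun x hx => ?_
    rw [coeff_weightedHomogeneousComponent]
    by_cases hax : coeff x.1 a = 0
    · rw [hax, zero_mul, zero_mul]
    · have hw1 : Finsupp.weight (wt N) x.1 = 0 := ha hax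
      have hxd : x.1 + x.2 = d := Finset.HasAntidiagonal.mem_antidiagonal.mp hx
      have hw2 : Finsupp.weight (wt N) x.2 = 0 := by
        have := congrArg (Finsupp.weight (wt N)) hxd
        rw [map_add, hw1, zero_add] at this
        rw [this, hd]
      rw [if_pos hw2]
  · rw [if_neg hd]
    symm
    refine Finset.sum_eq_zero fun x hx => ?_
    rw [coeff_weightedHomogeneousComponent]
    by_cases hax : coeff x.1 a = 0
    · rw [hax, zero_mul]
    · have hw1 : Finsupp.weight (wt N) x.1 = 0 := ha hax
      have hxd : x.1 + x.2 = d := Finset.HasAntidiagonal.mem_antidiagonal.mp hx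
      have hw2 : Finsupp.weight (wt N) x.2 ≠ 0 := fun h => hd (by
        rw [← hxd, map_add, hw1, h, add_zero])
      rw [if_neg hw2, mul_zero]

lemma exists_Phi_preimage :
    ∀ (n : ℕ) (t : (Fin N ⊕ Fin N) →₀ ℕ), (∑ i, t (Sum.inl i)) = n →
      Finsupp.weight (wt N) t = 0 → ∃ s, Phi N s = t := by
  intro n
  induction n using Nat.strong_induction_on with
  | _ n IH =>
    intro t hn hw
    rw [weight_eq] at hw
    rcases Nat.eq_zero_or_pos n with h0 | hpos
    · subst h0
      rw [sub_eq_zero] at hw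
      have hinl : (∑ i, (t (Sum.inl i) : ℤ)) = 0 := by exact_mod_cast hn
      have hinr : (∑ j, (t (Sum.inr j) : ℤ)) = 0 := by rw [← hw]; exact hinl
      refine ⟨0, ?_⟩
      rw [Phi_zero]
      ext a
      rcases a with i | j
      · have := Finset.sum_eq_zero_iff.mp hn i (Finset.mem_univ i)
        simpa using this.symm
      · have h' : (∑ j, t (Sum.inr j)) = 0 := by exact_mod_cast hinr
        have := Finset.sum_eq_zero_iff.mp h' j (Finset.mem_univ j)
        simpa using this.symm
    · have hi : ∃ i, t (Sum.inl i) ≠ 0 := by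
        by_contra h
        push_neg at h
        rw [Finset.sum_eq_zero fun i _ => h i] at hn
        omega
      obtain ⟨i, hi⟩ := hi
      have hj : ∃ j, t (Sum.inr j) ≠ 0 := by
        by_contra h
        push_neg at h
        have hz : (∑ j, (t (Sum.inr j) : ℤ)) = 0 := by simp [h]
        rw [hz, sub_zero] at hw
        have hz' : (∑ i, t (Sum.inl i)) = 0 := by exact_mod_cast hw
        omega
      obtain ⟨j, hj⟩ := hj
      set t' : (Fin N ⊕ Fin N) →₀ ℕ :=
        t - Finsupp.single (Sum.inl i) 1 - Finsupp.single (Sum.inr j) 1 with ht'def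
      have ht' : t = t' + Finsupp.single (Sum.inl i) 1 + Finsupp.single (Sum.inr j) 1 := by
        ext a
        rcases eq_or_ne a (Sum.inl i) with rfl | h1
        · simp [ht'def, Finsupp.single_apply]
          omega
        · rcases eq_or_ne a (Sum.inr j) with rfl | h2
          · simp [ht'def, Finsupp.single_apply]
            omega
          · simp [ht'def, Finsupp.single_apply, Ne.symm h1, Ne.symm h2]
      have hsuml : (∑ i', t' (Sum.inl i')) = n - 1 := by
        have hc := congrArg (fun u : (Fin N ⊕ Fin N) →₀ ℕ => ∑ i', u (Sum.inl i')) ht'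
        simp only [Finsupp.coe_add, Pi.add_apply] at hc
        rw [hn, Finset.sum_add_distrib, Finset.sum_add_distrib] at hc
        have h1 : (∑ i', (Finsupp.single (Sum.inl i) 1 : (Fin N ⊕ Fin N) →₀ ℕ)
            (Sum.inl i')) = 1 := by
          simp [Finsupp.single_apply]
        have h2 : (∑ i', (Finsupp.single (Sum.inr j) 1 : (Fin N ⊕ Fin N) →₀ ℕ)
            (Sum.inl i')) = 0 := by
          simp [Finsupp.single_apply]
        rw [h1, h2] at hc
        omega
      have hsumr : (∑ j', t' (Sum.inr j')) + 1 = ∑ j', t (Sum.inr j') := by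
        have hc := congrArg (fun u : (Fin N ⊕ Fin N) →₀ ℕ => ∑ j', u (Sum.inr j')) ht'
        simp only [Finsupp.coe_add, Pi.add_apply] at hc
        rw [Finset.sum_add_distrib, Finset.sum_add_distrib] at hc
        have h1 : (∑ j', (Finsupp.single (Sum.inr j) 1 : (Fin N ⊕ Fin N) →₀ ℕ)
            (Sum.inr j')) = 1 := by
          simp [Finsupp.single_apply]
        have h2 : (∑ j', (Finsupp.single (Sum.inl i) 1 : (Fin N ⊕ Fin N) →₀ ℕ)
            (Sum.inr j')) = 0 := by
          simp [Finsupp.single_apply]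
        rw [h1, h2] at hc
        omega
      have hw' : Finsupp.weight (wt N) t' = 0 := by
        rw [weight_eq]
        have e1 : (∑ i', (t' (Sum.inl i') : ℤ)) = (n : ℤ) - 1 := by
          rw [← Nat.cast_sum, hsuml]
          omega
        have e2 : (∑ j', (t' (Sum.inr j') : ℤ)) = (∑ j', (t (Sum.inr j') : ℤ)) - 1 := by
          rw [← Nat.cast_sum, ← Nat.cast_sum, ← hsumr]
          push_cast
          ring
        have e3 : (∑ i', (t (Sum.inl i') : ℤ)) = (n : ℤ) := by
          rw [← Nat.cast_sum, hn]
        rw [e1, e2]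
        omega
      obtain ⟨s', hs'⟩ := IH (n - 1) (by omega) t' hsuml hw'
      refine ⟨s' + Finsupp.single (i, j) 1, ?_⟩
      rw [Phi_add, Phi_single, one_smul, hs', uExp, ht']
      abel

lemma homog_mem_range (g : MvPolynomial (Fin N ⊕ Fin N) ℂ)
    (hg : IsWeightedHomogeneous (wt N) g 0) : ∃ h, psi N h = g := by
  classical
  have hex : ∀ t ∈ g.support, ∃ s, Phi N s = t := fun t ht =>
    exists_Phi_preimage N (∑ i, t (Sum.inl i)) t rfl (hg (MvPolynomial.mem_support_iff.mp ht))
  refine ⟨∑ t ∈ g.support.attach,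
    monomial (Classical.choose (hex t.1 t.2)) (coeff t.1 g), ?_⟩
  rw [map_sum]
  have hstep : ∀ t ∈ g.support.attach,
      psi N (monomial (Classical.choose (hex t.1 t.2)) (coeff t.1 g))
        = monomial t.1 (coeff t.1 g) := fun t _ => by
    rw [psi_monomial, Classical.choose_spec (hex t.1 t.2)]
  rw [Finset.sum_congr rfl hstep,
    Finset.sum_attach g.support fun t => monomial t (coeff t g)]
  exact (as_sum g).symm

lemma meson_eq (f : MvPolynomial (Fin N × Fin N) ℂ) :
    mesonMap N f = Ideal.Quotient.mk (sqedMomentIdeal N) (psi N f) := by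
  have h : mesonMap N = (Ideal.Quotient.mkₐ ℂ (sqedMomentIdeal N)).comp (psi N) := by
    rw [psi, comp_aeval]
    rfl
  rw [h]
  simp [Ideal.Quotient.mkₐ_eq_mk]

end SqedAux

/-- The kernel of `φ : ℂ[m_{ij}] → R/I`, `m_{ij} ↦ XᵢYⱼ`, is the ideal generated by the
`2×2` minors `m_{ij} m_{kl} − m_{il} m_{kj}` together with the trace `∑ᵢ m_{ii}`: the
Higgs branch chiral ring of SQED[N] is the coordinate ring of rank `≤ 1` traceless
matrices, the closure of the minimal nilpotent orbit in `sl_N^*`. -/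
theorem sqedN_higgs_branch_presentation (N : ℕ) :
    RingHom.ker (mesonMap N).toRingHom =
      Ideal.span
        ((Set.range fun q : (Fin N × Fin N) × Fin N × Fin N =>
            (X (q.1.1, q.1.2) * X (q.2.1, q.2.2) - X (q.1.1, q.2.2) * X (q.2.1, q.1.2) :
              MvPolynomial (Fin N × Fin N) ℂ)) ∪
          {∑ i : Fin N, X (i, i)}) := by
  classical
  have htr : SqedAux.psi N (∑ i : Fin N, X (i, i))
      = ∑ k : Fin N, X (Sum.inl k) * X (Sum.inr k) := by
    rw [map_sum]
    exact Finset.sum_congr rfl fun i _ => by rw [SqedAux.psi, aeval_X]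
  apply le_antisymm
  · intro f hf
    rw [RingHom.mem_ker] at hf
    have hf0 : mesonMap N f = 0 := hf
    rw [SqedAux.meson_eq] at hf0
    have hfI : SqedAux.psi N f ∈ sqedMomentIdeal N :=
      Ideal.Quotient.eq_zero_iff_mem.mp hf0
    rw [sqedMomentIdeal, Ideal.mem_span_singleton'] at hfI
    obtain ⟨g, hg⟩ := hfI
    have hKJ : SqedAux.minorIdeal N ≤ Ideal.span
        ((Set.range fun q : (Fin N × Fin N) × Fin N × Fin N =>
            (X (q.1.1, q.1.2) * X (q.2.1, q.2.2) - X (q.1.1, q.2.2) * X (q.2.1, q.1.2) :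
              MvPolynomial (Fin N × Fin N) ℂ)) ∪
          {∑ i : Fin N, X (i, i)}) := by
      rw [SqedAux.minorIdeal]
      exact Ideal.span_mono Set.subset_union_left
    by_cases hμ0 : (∑ k : Fin N, X (Sum.inl k) * X (Sum.inr k) :
        MvPolynomial (Fin N ⊕ Fin N) ℂ) = 0
    · have h0 : SqedAux.psi N f = 0 := by rw [← hg, hμ0, mul_zero]
      exact hKJ (SqedAux.mem_minor_of_psi_eq_zero N _ f rfl h0)
    · have hmg : IsWeightedHomogeneous (SqedAux.wt N)
          ((∑ k : Fin N, X (Sum.inl k) * X (Sum.inr k)) * g) 0 := by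
        rw [mul_comm, hg]
        exact SqedAux.psi_isHomog N f
      have hwhc := SqedAux.homog_mul_component N
        (∑ k : Fin N, X (Sum.inl k) * X (Sum.inr k)) g (SqedAux.mu_isHomog N)
      rw [IsWeightedHomogeneous.weightedHomogeneousComponent_same hmg] at hwhc
      have hgeq : g = weightedHomogeneousComponent (SqedAux.wt N) 0 g :=
        mul_left_cancel₀ hμ0 hwhc
      have hg0 : IsWeightedHomogeneous (SqedAux.wt N) g 0 := by
        rw [hgeq]
        exact weightedHomogeneousComponent_isWeightedHomogeneous 0 g
      obtain ⟨h, hh⟩ := SqedAux.homog_mem_range N g hg0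
      have hker : SqedAux.psi N (f - (∑ i : Fin N, X (i, i)) * h) = 0 := by
        rw [map_sub, map_mul, htr, hh, ← hg]
        ring
      have h1 := hKJ (SqedAux.mem_minor_of_psi_eq_zero N _ _ rfl hker)
      have h2 : (∑ i : Fin N, X (i, i)) * h ∈ Ideal.span
          ((Set.range fun q : (Fin N × Fin N) × Fin N × Fin N =>
              (X (q.1.1, q.1.2) * X (q.2.1, q.2.2) - X (q.1.1, q.2.2) * X (q.2.1, q.1.2) :
                MvPolynomial (Fin N × Fin N) ℂ)) ∪
            {∑ i : Fin N, X (i, i)}) :=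
        Ideal.mul_mem_right _ _ (Ideal.subset_span (Set.mem_union_right _ rfl))
      have := add_mem h1 h2
      simpa using this
  · rw [Ideal.span_le]
    rintro x hx
    rw [SetLike.mem_coe, RingHom.mem_ker]
    show mesonMap N x = 0
    rw [SqedAux.meson_eq, Ideal.Quotient.eq_zero_iff_mem]
    rcases hx with ⟨q, rfl⟩ | hx
    · have h0 : SqedAux.psi N
          (X (q.1.1, q.1.2) * X (q.2.1, q.2.2) - X (q.1.1, q.2.2) * X (q.2.1, q.1.2)) = 0 :=
        SqedAux.minor_le_ker N (Ideal.subset_span ⟨q, rfl⟩)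
      rw [h0]
      exact zero_mem _
    · rw [Set.mem_singleton_iff] at hx
      subst hx
      rw [htr, sqedMomentIdeal]
      exact Ideal.subset_span rfl
end

section
/- The kernel of ψ is the principal ideal of ℂ[w,z,t] generated by wz − t^N. Hence ℂ[w,z,t]/(wz − t^N), the coordinate ring of the A_{N−1} Kleinian singularity ℂ²/ℤ_N, embeds into R/I. (Section 5.2: the Higgs branch of the A_{N−1} quiver theory is the A_{N−1} singularity, with the single relation expressing WZ as proportional to the N-th power of the meson h.) -/
open MvPolynomial

/-- The ideal of `R := ℂ[X₁,…,X_N,Y₁,…,Y_N]` generated by the complex moment maps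
`XᵢYᵢ − X₁Y₁` (`i = 2,…,N`) of the `A_{N-1}` quiver gauge theory. -/
noncomputable def aNMomentIdeal (N : ℕ) (hN : 1 ≤ N) :
    Ideal (MvPolynomial (Fin N ⊕ Fin N) ℂ) :=
  Ideal.span (Set.range fun i : Fin (N - 1) =>
    X (Sum.inl (⟨(i : ℕ) + 1, by omega⟩ : Fin N)) * X (Sum.inr (⟨(i : ℕ) + 1, by omega⟩ : Fin N))
      - X (Sum.inl (⟨0, hN⟩ : Fin N)) * X (Sum.inr (⟨0, hN⟩ : Fin N)))

/-- The ℂ-algebra map `ψ : ℂ[w,z,t] → R/I`, `w ↦ ∏ᵢ Xᵢ`, `z ↦ ∏ᵢ Yᵢ`, `t ↦ X₁Y₁`. -/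
noncomputable def aNPresentation (N : ℕ) (hN : 1 ≤ N) :
    MvPolynomial (Fin 3) ℂ →ₐ[ℂ] MvPolynomial (Fin N ⊕ Fin N) ℂ ⧸ aNMomentIdeal N hN :=
  aeval ![Ideal.Quotient.mk (aNMomentIdeal N hN) (∏ i : Fin N, X (Sum.inl i)),
          Ideal.Quotient.mk (aNMomentIdeal N hN) (∏ i : Fin N, X (Sum.inr i)),
          Ideal.Quotient.mk (aNMomentIdeal N hN)
            (X (Sum.inl (⟨0, hN⟩ : Fin N)) * X (Sum.inr (⟨0, hN⟩ : Fin N)))]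

/-- The map `θ : ℂ[w,z,t] → ℂ[a,b]`, `w ↦ a^N`, `z ↦ b^N`, `t ↦ ab`. -/
noncomputable def thetaAN (N : ℕ) :
    MvPolynomial (Fin 3) ℂ →ₐ[ℂ] MvPolynomial (Fin 2) ℂ :=
  aeval ![X 0 ^ N, X 1 ^ N, X 0 * X 1]

/-- Exponent map corresponding to `θ` on monomials. -/
noncomputable def eMapAN (N : ℕ) (d : Fin 3 →₀ ℕ) : Fin 2 →₀ ℕ :=
  Finsupp.single 0 (N * d 0 + d 2) + Finsupp.single 1 (N * d 1 + d 2)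

/-- Reduction of exponents modulo `wz → t^N`. -/
noncomputable def redAN (N : ℕ) (d : Fin 3 →₀ ℕ) : Fin 3 →₀ ℕ :=
  Finsupp.single 0 (d 0 - min (d 0) (d 1)) + Finsupp.single 1 (d 1 - min (d 0) (d 1))
    + Finsupp.single 2 (d 2 + N * min (d 0) (d 1))

lemma eMapAN_apply0 (N : ℕ) (d : Fin 3 →₀ ℕ) : eMapAN N d 0 = N * d 0 + d 2 := by
  simp [eMapAN, Finsupp.single_apply]

lemma eMapAN_apply1 (N : ℕ) (d : Fin 3 →₀ ℕ) : eMapAN N d 1 = N * d 1 + d 2 := by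
  simp [eMapAN, Finsupp.single_apply]

lemma redAN_apply0 (N : ℕ) (d : Fin 3 →₀ ℕ) : redAN N d 0 = d 0 - min (d 0) (d 1) := by
  simp [redAN, Finsupp.single_apply]

lemma redAN_apply1 (N : ℕ) (d : Fin 3 →₀ ℕ) : redAN N d 1 = d 1 - min (d 0) (d 1) := by
  simp [redAN, Finsupp.single_apply]

lemma redAN_apply2 (N : ℕ) (d : Fin 3 →₀ ℕ) : redAN N d 2 = d 2 + N * min (d 0) (d 1) := by
  simp [redAN, Finsupp.single_apply]

lemma mono3_eq (d : Fin 3 →₀ ℕ) (c : ℂ) :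
    (monomial d c : MvPolynomial (Fin 3) ℂ) = C c * X 0 ^ d 0 * X 1 ^ d 1 * X 2 ^ d 2 := by
  have hd : d = Finsupp.single 0 (d 0) + Finsupp.single 1 (d 1) + Finsupp.single 2 (d 2) := by
    ext i; fin_cases i <;> simp [Finsupp.single_apply]
  rw [C_mul_X_pow_eq_monomial, X_pow_eq_monomial, X_pow_eq_monomial, monomial_mul,
    monomial_mul, mul_one, mul_one, ← hd]

lemma mono2_eq (e : Fin 2 →₀ ℕ) (c : ℂ) :
    (monomial e c : MvPolynomial (Fin 2) ℂ) = C c * X 0 ^ e 0 * X 1 ^ e 1 := by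
  have he : e = Finsupp.single 0 (e 0) + Finsupp.single 1 (e 1) := by
    ext i; fin_cases i <;> simp [Finsupp.single_apply]
  rw [C_mul_X_pow_eq_monomial, X_pow_eq_monomial, monomial_mul, mul_one, ← he]

lemma thetaAN_monomial (N : ℕ) (d : Fin 3 →₀ ℕ) (c : ℂ) :
    thetaAN N (monomial d c) = monomial (eMapAN N d) c := by
  rw [mono3_eq, mono2_eq, eMapAN_apply0, eMapAN_apply1]
  simp only [thetaAN, map_mul, map_pow, aeval_X, aeval_C, algebraMap_eq,
    Matrix.cons_val_zero, Matrix.cons_val_one, Matrix.head_cons, Matrix.cons_val_two,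
    Matrix.tail_cons]
  ring

lemma redAN_mem_span (N : ℕ) (d : Fin 3 →₀ ℕ) (c : ℂ) :
    (monomial d c : MvPolynomial (Fin 3) ℂ) - monomial (redAN N d) c ∈
      Ideal.span {(X 0 * X 1 - X 2 ^ N : MvPolynomial (Fin 3) ℂ)} := by
  rw [Ideal.mem_span_singleton]
  set m := min (d 0) (d 1) with hm
  have h0 : d 0 = (d 0 - m) + m := by omega
  have h1 : d 1 = (d 1 - m) + m := by omega
  have key : (monomial d c : MvPolynomial (Fin 3) ℂ) - monomial (redAN N d) c =
      C c * X 0 ^ (d 0 - m) * X 1 ^ (d 1 - m) * X 2 ^ d 2 *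
        ((X 0 * X 1) ^ m - (X 2 ^ N) ^ m) := by
    rw [mono3_eq, mono3_eq, redAN_apply0, redAN_apply1, redAN_apply2, ← hm]
    nth_rewrite 1 [h0]; nth_rewrite 1 [h1]
    ring
  rw [key]
  exact Dvd.dvd.mul_left (sub_dvd_pow_sub_pow _ _ m) _

lemma exists_reduced (N : ℕ) (p : MvPolynomial (Fin 3) ℂ) :
    ∃ q : MvPolynomial (Fin 3) ℂ,
      p - q ∈ Ideal.span {(X 0 * X 1 - X 2 ^ N : MvPolynomial (Fin 3) ℂ)} ∧
      ∀ d ∈ q.support, d 0 = 0 ∨ d 1 = 0 := by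
  induction p using MvPolynomial.induction_on' with
  | monomial d c =>
    refine ⟨monomial (redAN N d) c, redAN_mem_span N d c, ?_⟩
    intro e he
    have := MvPolynomial.support_monomial_subset he
    simp only [Finset.mem_singleton] at this
    subst this
    rw [redAN_apply0, redAN_apply1]
    omega
  | add p q hp hq =>
    obtain ⟨qp, hqp, hqp'⟩ := hp
    obtain ⟨qq, hqq, hqq'⟩ := hq
    refine ⟨qp + qq, ?_, ?_⟩
    · have : p + q - (qp + qq) = (p - qp) + (q - qq) := by ring
      rw [this]; exact Ideal.add_mem _ hqp hqq
    · intro d hd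
      rcases Finset.mem_union.mp (Finsupp.support_add hd) with h | h
      · exact hqp' d h
      · exact hqq' d h

lemma eMapAN_inj_on_reduced {N : ℕ} (hN : 1 ≤ N) {d d' : Fin 3 →₀ ℕ}
    (hd : d 0 = 0 ∨ d 1 = 0) (hd' : d' 0 = 0 ∨ d' 1 = 0)
    (h : eMapAN N d = eMapAN N d') : d = d' := by
  have h0 : N * d 0 + d 2 = N * d' 0 + d' 2 := by
    rw [← eMapAN_apply0 N d, ← eMapAN_apply0 N d', h]
  have h1 : N * d 1 + d 2 = N * d' 1 + d' 2 := by
    rw [← eMapAN_apply1 N d, ← eMapAN_apply1 N d', h]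
  have key : d 0 = d' 0 ∧ d 1 = d' 1 ∧ d 2 = d' 2 := by
    rcases hd with hA | hA <;> rcases hd' with hB | hB
    · rw [hA, hB] at h0 ⊢
      have : d 2 = d' 2 := by omega
      refine ⟨rfl, ?_, this⟩
      rw [this] at h1
      exact Nat.eq_of_mul_eq_mul_left hN (by omega)
    · rw [hA] at h0 ⊢
      rw [hB] at h1 ⊢
      -- d2 = N*d'0 + d'2, N*d1 + d2 = d'2
      have hz : N * (d 1 + d' 0) = 0 := by
        have := h0
        nlinarith [h0, h1]
      have : d 1 = 0 ∧ d' 0 = 0 := by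
        rcases Nat.mul_eq_zero.mp hz with h | h
        · omega
        · omega
      refine ⟨by omega, by omega, by omega⟩
    · rw [hA] at h1 ⊢
      rw [hB] at h0 ⊢
      have hz : N * (d 0 + d' 1) = 0 := by nlinarith [h0, h1]
      have : d 0 = 0 ∧ d' 1 = 0 := by
        rcases Nat.mul_eq_zero.mp hz with h | h
        · omega
        · omega
      refine ⟨by omega, by omega, by omega⟩
    · rw [hA, hB] at h1 ⊢
      have : d 2 = d' 2 := by omega
      refine ⟨?_, rfl, this⟩
      rw [this] at h0
      exact Nat.eq_of_mul_eq_mul_left hN (by omega)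
  ext i; fin_cases i
  · exact key.1
  · exact key.2.1
  · exact key.2.2

lemma reduced_eq_zero_of_theta_eq_zero {N : ℕ} (hN : 1 ≤ N)
    {q : MvPolynomial (Fin 3) ℂ} (hred : ∀ d ∈ q.support, d 0 = 0 ∨ d 1 = 0)
    (h : thetaAN N q = 0) : q = 0 := by
  by_contra hq
  obtain ⟨d₀, hd₀⟩ := Finset.nonempty_iff_ne_empty.mpr
    (fun he => hq (MvPolynomial.support_eq_empty.mp he))
  have hexp : thetaAN N q = ∑ d ∈ q.support, monomial (eMapAN N d) (coeff d q) := by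
    conv_lhs => rw [as_sum q]
    rw [map_sum]
    exact Finset.sum_congr rfl fun d _ => thetaAN_monomial N d (coeff d q)
  have hc : coeff (eMapAN N d₀) (thetaAN N q) = coeff d₀ q := by
    rw [hexp, MvPolynomial.coeff_sum]
    rw [Finset.sum_eq_single_of_mem d₀ hd₀]
    · simp [coeff_monomial]
    · intro d hd hne
      rw [coeff_monomial, if_neg]
      intro heq
      exact hne (eMapAN_inj_on_reduced hN (hred d hd) (hred d₀ hd₀) heq)
  rw [h] at hc
  simp only [coeff_zero] at hc
  exact (MvPolynomial.mem_support_iff.mp hd₀) hc.symm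

lemma theta_gen_zero (N : ℕ) :
    thetaAN N (X 0 * X 1 - X 2 ^ N : MvPolynomial (Fin 3) ℂ) = 0 := by
  simp only [thetaAN, map_sub, map_mul, map_pow, aeval_X, Matrix.cons_val_zero,
    Matrix.cons_val_one, Matrix.head_cons, Matrix.cons_val_two, Matrix.tail_cons]
  ring

lemma ker_theta_le (N : ℕ) (hN : 1 ≤ N) (p : MvPolynomial (Fin 3) ℂ)
    (h : thetaAN N p = 0) :
    p ∈ Ideal.span {(X 0 * X 1 - X 2 ^ N : MvPolynomial (Fin 3) ℂ)} := by
  obtain ⟨q, hpq, hred⟩ := exists_reduced N p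
  have hJker : ∀ r ∈ Ideal.span {(X 0 * X 1 - X 2 ^ N : MvPolynomial (Fin 3) ℂ)},
      thetaAN N r = 0 := by
    intro r hr
    rw [Ideal.mem_span_singleton] at hr
    obtain ⟨s, rfl⟩ := hr
    rw [map_mul, theta_gen_zero, zero_mul]
  have hq0 : thetaAN N q = 0 := by
    have := hJker _ hpq
    rw [map_sub, h, zero_sub, neg_eq_zero] at this
    exact this
  have := reduced_eq_zero_of_theta_eq_zero hN hred hq0
  rw [this, sub_zero] at hpq
  exact hpq

/-- The representatives in `R` of the images of `w,z,t`. -/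
noncomputable def vAN (N : ℕ) (hN : 1 ≤ N) : Fin 3 → MvPolynomial (Fin N ⊕ Fin N) ℂ :=
  ![∏ i : Fin N, X (Sum.inl i), ∏ i : Fin N, X (Sum.inr i),
    X (Sum.inl (⟨0, hN⟩ : Fin N)) * X (Sum.inr (⟨0, hN⟩ : Fin N))]

/-- The map `R → ℂ[a,b]`, `Xᵢ ↦ a`, `Yᵢ ↦ b`. -/
noncomputable def phiAN (N : ℕ) :
    MvPolynomial (Fin N ⊕ Fin N) ℂ →ₐ[ℂ] MvPolynomial (Fin 2) ℂ :=
  aeval (Sum.elim (fun _ => X 0) (fun _ => X 1))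

noncomputable def aNMomentIdealCopy (N : ℕ) (hN : 1 ≤ N) :
    Ideal (MvPolynomial (Fin N ⊕ Fin N) ℂ) :=
  Ideal.span (Set.range fun i : Fin (N - 1) =>
    X (Sum.inl (⟨(i : ℕ) + 1, by omega⟩ : Fin N)) * X (Sum.inr (⟨(i : ℕ) + 1, by omega⟩ : Fin N))
      - X (Sum.inl (⟨0, hN⟩ : Fin N)) * X (Sum.inr (⟨0, hN⟩ : Fin N)))

lemma moment_le_ker_phi (N : ℕ) (hN : 1 ≤ N) :
    aNMomentIdealCopy N hN ≤ RingHom.ker (phiAN N).toRingHom := by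
  rw [aNMomentIdealCopy, Ideal.span_le]
  rintro _ ⟨i, rfl⟩
  simp [RingHom.mem_ker, phiAN]

lemma theta_eq_comp (N : ℕ) (hN : 1 ≤ N) :
    (phiAN N).comp (aeval (vAN N hN)) = thetaAN N := by
  rw [comp_aeval]
  have h : (fun i => (phiAN N) (vAN N hN i)) =
      ![X 0 ^ N, X 1 ^ N, (X 0 : MvPolynomial (Fin 2) ℂ) * X 1] := by
    funext i
    fin_cases i <;>
      simp [vAN, phiAN, Finset.prod_const, Finset.card_univ]
  rw [h]; rfl

lemma mk_XY (N : ℕ) (hN : 1 ≤ N) (i : Fin N) :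
    Ideal.Quotient.mk (aNMomentIdealCopy N hN) (X (Sum.inl i) * X (Sum.inr i)) =
      Ideal.Quotient.mk (aNMomentIdealCopy N hN)
        (X (Sum.inl (⟨0, hN⟩ : Fin N)) * X (Sum.inr (⟨0, hN⟩ : Fin N))) := by
  obtain ⟨iv, hiv⟩ := i
  cases iv with
  | zero => rfl
  | succ m =>
    rw [Ideal.Quotient.eq]
    apply Ideal.subset_span
    exact ⟨⟨m, by omega⟩, rfl⟩

lemma mk_gen_zero (N : ℕ) (hN : 1 ≤ N) :
    Ideal.Quotient.mk (aNMomentIdealCopy N hN) (aeval (R := ℂ) (vAN N hN) (X 0 * X 1 - X 2 ^ N)) = 0 := by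
  have hw : aeval (R := ℂ) (vAN N hN) (X 0 : MvPolynomial (Fin 3) ℂ) = ∏ i : Fin N, X (Sum.inl i) := by
    simp [vAN]
  have hz : aeval (R := ℂ) (vAN N hN) (X 1 : MvPolynomial (Fin 3) ℂ) = ∏ i : Fin N, X (Sum.inr i) := by
    simp [vAN]
  have ht : aeval (R := ℂ) (vAN N hN) (X 2 : MvPolynomial (Fin 3) ℂ) =
      X (Sum.inl (⟨0, hN⟩ : Fin N)) * X (Sum.inr (⟨0, hN⟩ : Fin N)) := by
    simp [vAN]
  rw [map_sub, map_mul, map_pow, hw, hz, ht, map_sub, map_mul, map_pow]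
  rw [← map_mul, ← Finset.prod_mul_distrib, map_prod]
  rw [Finset.prod_congr rfl fun i _ => mk_XY N hN i, Finset.prod_const, Finset.card_univ,
    Fintype.card_fin, sub_self]

lemma ker_aeval_vAN (N : ℕ) (hN : 1 ≤ N) (p : MvPolynomial (Fin 3) ℂ)
    (h : aeval (R := ℂ) (vAN N hN) p ∈ aNMomentIdealCopy N hN) :
    p ∈ Ideal.span {(X 0 * X 1 - X 2 ^ N : MvPolynomial (Fin 3) ℂ)} := by
  apply ker_theta_le N hN
  rw [← theta_eq_comp N hN]
  have := moment_le_ker_phi N hN h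
  rw [RingHom.mem_ker] at this
  exact this

lemma copy_eq (N : ℕ) (hN : 1 ≤ N) : aNMomentIdeal N hN = aNMomentIdealCopy N hN := rfl

lemma psi_apply (N : ℕ) (hN : 1 ≤ N) (p : MvPolynomial (Fin 3) ℂ) :
    aNPresentation N hN p =
      Ideal.Quotient.mk (aNMomentIdeal N hN) (aeval (R := ℂ) (vAN N hN) p) := by
  have h : aNPresentation N hN =
      (Ideal.Quotient.mkₐ ℂ (aNMomentIdeal N hN)).comp (aeval (vAN N hN)) := by
    rw [comp_aeval]
    unfold aNPresentation
    congr 1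
    funext i; fin_cases i <;> rfl
  rw [h]; rfl

/-- The kernel of `ψ : ℂ[w,z,t] → R/I` (`w ↦ ∏Xᵢ`, `z ↦ ∏Yᵢ`, `t ↦ X₁Y₁`) is the
principal ideal `(wz − t^N)`.  Hence `ℂ[w,z,t]/(wz − t^N)` — the coordinate ring of the
`A_{N-1}` Kleinian singularity `ℂ²/ℤ_N` — embeds into `R/I`, via the induced map. -/
theorem aN_quiver_higgs_branch_presentation (N : ℕ) (hN : 1 ≤ N) :
    RingHom.ker (aNPresentation N hN).toRingHom =
      Ideal.span {(X 0 * X 1 - X 2 ^ N : MvPolynomial (Fin 3) ℂ)} ∧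
    ∃ ι : (MvPolynomial (Fin 3) ℂ ⧸
          (Ideal.span {(X 0 * X 1 - X 2 ^ N : MvPolynomial (Fin 3) ℂ)}))
        →ₐ[ℂ] MvPolynomial (Fin N ⊕ Fin N) ℂ ⧸ aNMomentIdeal N hN,
      Function.Injective ι ∧
      ι.comp (Ideal.Quotient.mkₐ ℂ _) = aNPresentation N hN := by
  have hker : RingHom.ker (aNPresentation N hN).toRingHom =
      Ideal.span {(X 0 * X 1 - X 2 ^ N : MvPolynomial (Fin 3) ℂ)} := by
    ext p
    rw [RingHom.mem_ker]
    have hcoe : (aNPresentation N hN).toRingHom p = aNPresentation N hN p := rfl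
    rw [hcoe, psi_apply]
    constructor
    · intro hp
      apply ker_aeval_vAN N hN p
      rw [← copy_eq]
      exact Ideal.Quotient.eq_zero_iff_mem.mp hp
    · intro hp
      rw [Ideal.mem_span_singleton] at hp
      obtain ⟨s, rfl⟩ := hp
      rw [map_mul, map_mul]
      have h0 : Ideal.Quotient.mk (aNMomentIdeal N hN)
          (aeval (R := ℂ) (vAN N hN) (X 0 * X 1 - X 2 ^ N)) = 0 := by
        rw [copy_eq]; exact mk_gen_zero N hN
      rw [h0, zero_mul]
  have hzero : ∀ a ∈ Ideal.span {(X 0 * X 1 - X 2 ^ N : MvPolynomial (Fin 3) ℂ)},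
      aNPresentation N hN a = 0 := by
    intro a ha
    rw [← hker] at ha
    exact ha
  refine ⟨hker, Ideal.Quotient.liftₐ _ (aNPresentation N hN) hzero, ?_,
    Ideal.Quotient.liftₐ_comp _ _ hzero⟩
  rw [injective_iff_map_eq_zero]
  intro x hx
  obtain ⟨p, rfl⟩ := Ideal.Quotient.mkₐ_surjective ℂ _ x
  have h1 := AlgHom.congr_fun
    (Ideal.Quotient.liftₐ_comp _ (aNPresentation N hN) hzero) p
  rw [AlgHom.comp_apply] at h1
  rw [h1] at hx
  rw [Ideal.Quotient.mkₐ_eq_mk, Ideal.Quotient.eq_zero_iff_mem, ← hker]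
  exact hx
end
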